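/- In the undirected graph G consisting of m := n/5 undirected 5-cycles C_1,...,C_m with cross-cycle edges (v_i^1,v_{i+1}^1), (v_i^2,v_{i+1}^3), (v_i^3,v_{i+1}^5), (v_i^4,v_{i+1}^2), (v_i^5,v_{i+1}^4), where all edges of C_i have weight 1/3^i and all cross-cycle edges have weight 1: for every vertex v_i^k with cross-cycle edge to v_{i+1}^j, the 3-edge path consisting of that cross-cycle edge followed by the two cycle edges of C_{i+1} from v_{i+1}^j to v_{i+1}^{j+2 (mod 5)} is the unique shortest path between its endpoints, of weight 1 + 2/3^{i+1}. -/

import Mathlib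

/-- The weight of a path (list of vertices): sum of weights of consecutive edges. -/
def pathWeight {V : Type} (w : V → V → ℝ) : List V → ℝ
  | [] => 0
  | [_] => 0
  | a :: b :: rest => w a b + pathWeight w (b :: rest)

/-- A nonempty list of vertices is a path if consecutive vertices are joined by edges. -/
def IsPath {V : Type} (E : V → V → Prop) : List V → Prop
  | [] => False
  | [_] => True
  | a :: b :: rest => E a b ∧ IsPath E (b :: rest)

/-- `p` is a shortest path: it is a path, and no path with the same endpoints is shorter. -/
def IsShortestPath {V : Type} (E : V → V → Prop) (w : V → V → ℝ) (p : List V) : Prop :=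
  IsPath E p ∧ ∀ q : List V, IsPath E q → q.head? = p.head? → q.getLast? = p.getLast? →
    pathWeight w p ≤ pathWeight w q

/-- Cross-edge pattern of the undirected construction: the cross edge from
v_i^k goes to v_{i+1}^{2k} (superscripts mod 5). -/
def cross5 (k : Fin 5) : Fin 5 := 2 * k

/-- Edges (symmetric) of the undirected lower-bound construction: the 5-cycle
edges of C_i (1 ≤ i ≤ m) and the cross-cycle edges v_i^k — v_{i+1}^{2k}. -/
def undirE (m : ℕ) (u v : ℕ × Fin 5) : Prop :=
  (u.1 = v.1 ∧ 1 ≤ u.1 ∧ u.1 ≤ m ∧ (v.2 = u.2 + 1 ∨ u.2 = v.2 + 1)) ∨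
  (v.1 = u.1 + 1 ∧ 1 ≤ u.1 ∧ u.1 + 1 ≤ m ∧ v.2 = cross5 u.2) ∨
  (u.1 = v.1 + 1 ∧ 1 ≤ v.1 ∧ v.1 + 1 ≤ m ∧ u.2 = cross5 v.2)

/-- Weights: edges of C_i weigh 1/3^i, cross-cycle edges weigh 1. -/
noncomputable def undirW (u v : ℕ × Fin 5) : ℝ :=
  if u.1 = v.1 then (1 : ℝ) / 3 ^ u.1 else 1


/-!
The canonical path is certified by a potential `φ` on the vertices, a feasible solution of the
dual shortest-path LP: `φ v - φ u ≤ w u v` on every edge, with equality only on the three edges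
of the canonical path. Summing along any path `q` from `v_i^k` to `v_{i+1}^{2k+2}` gives
`w q ≥ φ(end) - φ(start) = 1 + 2/3^{i+1}`, and equality forces every edge of `q` to be canonical.
Each vertex has at most one outgoing canonical edge and the endpoint has none, so then `q` is the
canonical path. Here `φ` is `0` below `C_i` and `1` above `C_{i+1}`.
-/

section PathPotential

variable {V : Type} {E : V → V → Prop} {w : V → V → ℝ} {φ : V → ℝ}

theorem sub_le_pathWeight_of_potential (hφ : ∀ u v, E u v → φ v - φ u ≤ w u v) :
    ∀ {a b : V} {q : List V}, IsPath E (a :: q) → (a :: q).getLast? = some b →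
      φ b - φ a ≤ pathWeight w (a :: q)
  | _, _, [], _, hb => by
    simp only [List.getLast?_singleton, Option.some.injEq] at hb
    simp [hb, pathWeight]
  | a, _, c :: _, ⟨hac, hq⟩, hb => by
    have := sub_le_pathWeight_of_potential hφ hq (by simpa using hb)
    have := hφ a c hac
    simp only [pathWeight]
    linarith

theorem isChain_of_pathWeight_eq_potential (hφ : ∀ u v, E u v → φ v - φ u ≤ w u v)
    {T : V → V → Prop} (hT : ∀ u v, E u v → φ v - φ u = w u v → T u v) :
    ∀ {a b : V} {q : List V}, IsPath E (a :: q) → (a :: q).getLast? = some b →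
      pathWeight w (a :: q) = φ b - φ a → (a :: q).IsChain T
  | _, _, [], _, _, _ => .singleton _
  | a, b, c :: q, ⟨hac, hq⟩, hb, heq => by
    have hb' : (c :: q).getLast? = some b := by simpa using hb
    have h₁ := sub_le_pathWeight_of_potential hφ hq hb'
    have h₂ := hφ a c hac
    simp only [pathWeight] at heq
    exact .cons_cons (hT a c hac (by linarith))
      (isChain_of_pathWeight_eq_potential hφ hT hq hb' (by linarith))

end PathPotential

theorem List.IsChain.tail_eq_of_getLast?_eq {α : Type} {R : α → α → Prop}
    (hR : ∀ ⦃a b c⦄, R a b → R a c → b = c) {z : α} (hz : ∀ y, ¬R z y) :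
    ∀ {x : α} {p q : List α}, (x :: p).IsChain R → (x :: q).IsChain R →
      (x :: p).getLast? = some z → (x :: q).getLast? = some z → p = q
  | _, [], [], _, _, _, _ => rfl
  | _, [], _ :: _, _, hq, hp, _ => by
    simp only [List.getLast?_singleton, Option.some.injEq] at hp
    exact absurd (List.isChain_cons_cons.1 hq).1 (hp ▸ hz _)
  | _, _ :: _, [], hp, _, _, hq => by
    simp only [List.getLast?_singleton, Option.some.injEq] at hq
    exact absurd (List.isChain_cons_cons.1 hp).1 (hq ▸ hz _)
  | _, _ :: _, _ :: _, hp, hq, hpz, hqz => by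
    rw [List.isChain_cons_cons] at hp hq
    obtain rfl := hR hp.1 hq.1
    rw [tail_eq_of_getLast?_eq hR hz hp.2 hq.2 (by simpa using hpz) (by simpa using hqz)]

/- The potential on `C_i` at `v_i^c` and on `C_{i+1}` at `v_{i+1}^c`, in units of
`1 / (4 * 3^(i+1))`, indexed by `c - k` and `c - 2k`. An edge of `C_i` is 12 units long and an
edge of `C_{i+1}` is 4: the second table climbs 0, 4, 8 along the canonical path, and
`cycleOffset d > nextCycleOffset (2 * d)` for `d ≠ 0` makes the canonical cross edge the only
tight one. -/
def cycleOffset : Fin 5 → ℤ := ![0, 10, 4, 6, 8]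

def nextCycleOffset : Fin 5 → ℤ := ![0, 4, 8, 6, 3]

theorem cycleOffset_mem_Icc : ∀ d, cycleOffset d ∈ Set.Icc 0 10 := by decide

theorem nextCycleOffset_mem_Icc : ∀ d, nextCycleOffset d ∈ Set.Icc 0 10 := by decide

theorem nextCycleOffset_succ_sub_le :
    ∀ d, nextCycleOffset (d + 1) - nextCycleOffset d ≤ 4 ∧
      (nextCycleOffset (d + 1) - nextCycleOffset d = 4 → d = 0 ∨ d = 1) := by decide

theorem nextCycleOffset_sub_succ_lt : ∀ d, nextCycleOffset d - nextCycleOffset (d + 1) < 4 := by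
  decide

theorem nextCycleOffset_cross5_le :
    ∀ d, nextCycleOffset (cross5 d) ≤ cycleOffset d ∧
      (nextCycleOffset (cross5 d) = cycleOffset d → d = 0) := by decide

def IsCanonicalStep (i : ℕ) (k : Fin 5) (u v : ℕ × Fin 5) : Prop :=
  (u = (i, k) ∧ v = (i + 1, cross5 k)) ∨
  (u = (i + 1, cross5 k) ∧ v = (i + 1, cross5 k + 1)) ∨
  (u = (i + 1, cross5 k + 1) ∧ v = (i + 1, cross5 k + 2))

noncomputable def potential (i : ℕ) (k : Fin 5) (v : ℕ × Fin 5) : ℝ :=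
  if v.1 < i then 0
  else if v.1 = i then cycleOffset (v.2 - k) / (4 * 3 ^ (i + 1))
  else if v.1 = i + 1 then 1 + nextCycleOffset (v.2 - cross5 k) / (4 * 3 ^ (i + 1))
  else 1

section PotentialValues

variable {i j : ℕ} {k c : Fin 5}

theorem potential_of_lt (h : j < i) : potential i k (j, c) = 0 := if_pos h

theorem potential_self : potential i k (i, c) = cycleOffset (c - k) / (4 * 3 ^ (i + 1)) := by
  simp [potential]

theorem potential_succ :
    potential i k (i + 1, c) = 1 + nextCycleOffset (c - cross5 k) / (4 * 3 ^ (i + 1)) := by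
  simp [potential]

theorem potential_of_gt (h : i + 1 < j) : potential i k (j, c) = 1 := by
  simp [potential, show ¬j < i by omega, show j ≠ i by omega, show j ≠ i + 1 by omega]

theorem offset_div_mem_Ico {a : ℤ} (ha : a ∈ Set.Icc 0 10) :
    (a : ℝ) / (4 * 3 ^ (i + 1)) ∈ Set.Ico 0 1 := by
  have h12 : (12 : ℝ) ≤ 4 * 3 ^ (i + 1) := by
    have : (3 : ℝ) ≤ 3 ^ (i + 1) := le_self_pow₀ (by norm_num) (by omega)
    linarith
  obtain ⟨ha₀, ha₁⟩ : (0 : ℝ) ≤ a ∧ (a : ℝ) ≤ 10 := by exact_mod_cast ha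
  exact ⟨by positivity, (div_lt_one (by positivity)).2 (by linarith)⟩

end PotentialValues

theorem intCast_div_sub_intCast_div {N : ℝ} (a b : ℤ) :
    (a : ℝ) / N - b / N = ((a - b : ℤ) : ℝ) / N := by
  push_cast; ring

theorem potential_cycleEdge (i j : ℕ) (k c : Fin 5) :
    potential i k (j, c + 1) - potential i k (j, c) ≤ 1 / 3 ^ j ∧
    potential i k (j, c) - potential i k (j, c + 1) < 1 / 3 ^ j ∧
    (potential i k (j, c + 1) - potential i k (j, c) = 1 / 3 ^ j →
      IsCanonicalStep i k (j, c) (j, c + 1)) := by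
  have hw : (0 : ℝ) < 1 / 3 ^ j := by positivity
  have hN : (0 : ℝ) < 4 * 3 ^ (i + 1) := by positivity
  rcases lt_trichotomy j i with hj | rfl | hj
  · simp only [potential_of_lt hj, sub_self]
    exact ⟨hw.le, hw, fun h => absurd h hw.ne⟩
  · have hw12 : (1 : ℝ) / 3 ^ j = ((12 : ℤ) : ℝ) / (4 * 3 ^ (j + 1)) := by
      push_cast; field_simp; ring
    rw [potential_self, potential_self, add_sub_right_comm, hw12, intCast_div_sub_intCast_div,
      intCast_div_sub_intCast_div, div_le_div_iff_of_pos_right hN,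
      div_lt_div_iff_of_pos_right hN, div_left_inj' hN.ne', Int.cast_le, Int.cast_lt, Int.cast_inj]
    obtain ⟨_, _⟩ := cycleOffset_mem_Icc (c - k)
    obtain ⟨_, _⟩ := cycleOffset_mem_Icc (c - k + 1)
    omega
  obtain rfl | hj := (Nat.succ_le_of_lt hj).eq_or_lt
  · have hw4 : (1 : ℝ) / 3 ^ (i + 1) = ((4 : ℤ) : ℝ) / (4 * 3 ^ (i + 1)) := by
      push_cast; field_simp
    rw [potential_succ, potential_succ, add_sub_add_left_eq_sub, add_sub_add_left_eq_sub,
      add_sub_right_comm, hw4, intCast_div_sub_intCast_div, intCast_div_sub_intCast_div,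
      div_le_div_iff_of_pos_right hN, div_lt_div_iff_of_pos_right hN, div_left_inj' hN.ne',
      Int.cast_le, Int.cast_lt, Int.cast_inj]
    obtain ⟨hle, htight⟩ := nextCycleOffset_succ_sub_le (c - cross5 k)
    refine ⟨hle, nextCycleOffset_sub_succ_lt _, fun h => ?_⟩
    rcases htight h with h | h
    · exact Or.inr (Or.inl ⟨by rw [sub_eq_zero.1 h], by rw [sub_eq_zero.1 h]⟩)
    · rw [sub_eq_iff_eq_add'.1 h, add_assoc]
      exact Or.inr (Or.inr ⟨rfl, rfl⟩)
  · simp only [potential_of_gt hj, sub_self]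
    exact ⟨hw.le, hw, fun h => absurd h hw.ne⟩

theorem potential_crossEdge (i j : ℕ) (k c : Fin 5) :
    -1 < potential i k (j + 1, cross5 c) - potential i k (j, c) ∧
    potential i k (j + 1, cross5 c) - potential i k (j, c) ≤ 1 ∧
    (potential i k (j + 1, cross5 c) - potential i k (j, c) = 1 →
      IsCanonicalStep i k (j, c) (j + 1, cross5 c)) := by
  rcases lt_trichotomy (j + 1) i with hj | rfl | hj
  · rw [potential_of_lt hj, potential_of_lt (by omega)]
    norm_num
  · have hD := offset_div_mem_Ico (i := j + 1) (cycleOffset_mem_Icc (cross5 c - k))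
    rw [potential_self, potential_of_lt (lt_add_one j)]
    exact ⟨by linarith [hD.1], by linarith [hD.2], fun h => by exfalso; linarith [hD.2]⟩
  obtain rfl | hj := Nat.lt_succ_iff.1 hj |>.eq_or_lt
  · have hN : (0 : ℝ) < 4 * 3 ^ (i + 1) := by positivity
    have hC := offset_div_mem_Ico (i := i) (nextCycleOffset_mem_Icc (cross5 (c - k)))
    have hD := offset_div_mem_Ico (i := i) (cycleOffset_mem_Icc (c - k))
    obtain ⟨hle, htight⟩ := nextCycleOffset_cross5_le (c - k)
    have hCD : (nextCycleOffset (cross5 (c - k)) : ℝ) / (4 * 3 ^ (i + 1)) ≤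
        cycleOffset (c - k) / (4 * 3 ^ (i + 1)) :=
      div_le_div_of_nonneg_right (by exact_mod_cast hle) hN.le
    rw [potential_succ, potential_self, cross5, cross5, ← mul_sub, ← cross5]
    refine ⟨by linarith [hC.1, hD.2], by linarith, fun h => ?_⟩
    have hck : c - k = 0 := htight <| by
      exact_mod_cast (div_left_inj' hN.ne').1 (show (nextCycleOffset (cross5 (c - k)) : ℝ) /
        (4 * 3 ^ (i + 1)) = cycleOffset (c - k) / (4 * 3 ^ (i + 1)) by linarith)
    rw [sub_eq_zero.1 hck]
    exact Or.inl ⟨rfl, rfl⟩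
  obtain rfl | hj := Nat.succ_le_of_lt hj |>.eq_or_lt
  · have hC := offset_div_mem_Ico (i := i) (nextCycleOffset_mem_Icc (c - cross5 k))
    rw [potential_of_gt (lt_add_one (i + 1)), potential_succ]
    exact ⟨by linarith [hC.2], by linarith [hC.1], fun h => by exfalso; linarith [hC.1]⟩
  · rw [potential_of_gt hj, potential_of_gt (by omega)]
    norm_num

theorem potential_sub_le_undirW {m i : ℕ} {k : Fin 5} {u v : ℕ × Fin 5} (h : undirE m u v) :
    potential i k v - potential i k u ≤ undirW u v ∧
      (potential i k v - potential i k u = undirW u v → IsCanonicalStep i k u v) := by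
  obtain ⟨j, c⟩ := u
  obtain ⟨j', c'⟩ := v
  simp only [undirE] at h
  rcases h with ⟨rfl, -, -, rfl | rfl⟩ | ⟨rfl, -, -, rfl⟩ | ⟨rfl, -, -, rfl⟩
  · have := potential_cycleEdge i j k c
    simp only [undirW, if_true]
    exact ⟨this.1, this.2.2⟩
  · have := (potential_cycleEdge i j k c').2.1
    simp only [undirW, if_true]
    exact ⟨this.le, fun h => absurd h this.ne⟩
  · have := potential_crossEdge i j k c
    simp only [undirW, Nat.left_eq_add, one_ne_zero, if_false]
    exact this.2
  · have := (potential_crossEdge i j' k c').1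
    simp only [undirW, Nat.add_eq_left, one_ne_zero, if_false]
    exact ⟨by linarith, fun h => by exfalso; linarith⟩

theorem potential_last_sub_potential_first (i : ℕ) (k : Fin 5) :
    potential i k (i + 1, cross5 k + 2) - potential i k (i, k) = 1 + 2 / 3 ^ (i + 1) := by
  rw [potential_succ, potential_self, add_sub_cancel_left, sub_self]
  have h8 : nextCycleOffset 2 = 8 := rfl
  have h0 : cycleOffset 0 = 0 := rfl
  rw [h8, h0]
  field_simp
  ring

def canonicalPath (i : ℕ) (k : Fin 5) : List (ℕ × Fin 5) :=
  [(i, k), (i + 1, cross5 k), (i + 1, cross5 k + 1), (i + 1, cross5 k + 2)]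

theorem isCanonicalStep_functional {i : ℕ} {k : Fin 5} :
    ∀ ⦃a b c⦄, IsCanonicalStep i k a b → IsCanonicalStep i k a c → b = c := by
  rintro a b c (⟨rfl, rfl⟩ | ⟨rfl, rfl⟩ | ⟨rfl, rfl⟩) (⟨h, rfl⟩ | ⟨h, rfl⟩ | ⟨h, rfl⟩) <;>
    simp_all [Prod.ext_iff]

theorem not_isCanonicalStep_last {i : ℕ} {k : Fin 5} (v : ℕ × Fin 5) :
    ¬IsCanonicalStep i k (i + 1, cross5 k + 2) v := by
  rintro (⟨h, -⟩ | ⟨h, -⟩ | ⟨h, -⟩) <;> simp_all [Prod.ext_iff]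

theorem canonicalPath_isChain (i : ℕ) (k : Fin 5) :
    (canonicalPath i k).IsChain (IsCanonicalStep i k) := by
  simp [canonicalPath, IsCanonicalStep]

theorem canonicalPath_isPath {m i : ℕ} (hi : 1 ≤ i) (him : i + 1 ≤ m) (k : Fin 5) :
    IsPath (undirE m) (canonicalPath i k) := by
  refine ⟨.inr (.inl ⟨rfl, hi, him, rfl⟩), .inl ⟨rfl, by omega, him, .inl rfl⟩,
    .inl ⟨rfl, by omega, him, .inl ?_⟩, trivial⟩
  rw [add_assoc]
  rfl

theorem pathWeight_canonicalPath (i : ℕ) (k : Fin 5) :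
    pathWeight undirW (canonicalPath i k) = 1 + 2 / 3 ^ (i + 1) := by
  simp [canonicalPath, pathWeight, undirW]
  ring

/-- each canonical 3-edge path (cross edge from v_i^k to
v_{i+1}^{2k}, then two cycle edges of C_{i+1}) has weight 1 + 2/3^{i+1} and is
the unique shortest path between its endpoints. -/
theorem stmt9 (m i : ℕ) (hi : 1 ≤ i) (him : i + 1 ≤ m) (k : Fin 5) :
    IsPath (undirE m)
      [((i, k) : ℕ × Fin 5), (i + 1, cross5 k), (i + 1, cross5 k + 1), (i + 1, cross5 k + 2)] ∧
    pathWeight undirW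
      [((i, k) : ℕ × Fin 5), (i + 1, cross5 k), (i + 1, cross5 k + 1), (i + 1, cross5 k + 2)]
        = 1 + 2 / 3 ^ (i + 1) ∧
    ∀ q : List (ℕ × Fin 5), IsPath (undirE m) q →
      q.head? = some ((i, k) : ℕ × Fin 5) →
      q.getLast? = some ((i + 1, cross5 k + 2) : ℕ × Fin 5) →
      q ≠ [((i, k) : ℕ × Fin 5), (i + 1, cross5 k), (i + 1, cross5 k + 1), (i + 1, cross5 k + 2)] →
      pathWeight undirW q
        > pathWeight undirW
            [((i, k) : ℕ × Fin 5), (i + 1, cross5 k), (i + 1, cross5 k + 1), (i + 1, cross5 k + 2)] := by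
  refine ⟨canonicalPath_isPath hi him k, pathWeight_canonicalPath i k, fun q hq hs ht hne => ?_⟩
  obtain ⟨q, rfl⟩ := List.head?_eq_some_iff.1 hs
  have hle := fun u v (h : undirE m u v) => (potential_sub_le_undirW (i := i) (k := k) h).1
  have hbound := sub_le_pathWeight_of_potential hle hq ht
  rw [potential_last_sub_potential_first] at hbound
  refine lt_of_le_of_ne (pathWeight_canonicalPath i k ▸ hbound) fun heq => hne ?_
  have hchain := isChain_of_pathWeight_eq_potential hle
    (fun u v h => (potential_sub_le_undirW h).2) hq ht
    (by rw [potential_last_sub_potential_first, ← heq]; exact pathWeight_canonicalPath i k)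
  exact congrArg _ (hchain.tail_eq_of_getLast?_eq isCanonicalStep_functional
    not_isCanonicalStep_last (canonicalPath_isChain i k) ht rfl)
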